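/- Asymptotic variance of the quadratic variation of fractional Brownian motion, critical case H = 3/4. Let ρ(r) = (1/2)(|r+1|^{3/2} + |r−1|^{3/2} − 2|r|^{3/2}) for r ∈ ℤ, and set σ_n² = 2 Σ_{|r|<n} (n − |r|) ρ(r)² for n ≥ 1. Then σ_n²/(n log n) → 9/16 as n → ∞. -/

import Mathlib

/-!
By evenness, `σ_n² = 2(n + 2 Σ_{0<j<n} (n - j) ρ(j)²)`. The mean value theorem for
`y ↦ (y+1)^{3/2} - y^{3/2}` on `[j-1, j]` writes `ρ(j) = 3 / (4(√(c+1) + √c))` for some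
`c ∈ (j-1, j)`, so that `ρ(j)² = 9/(64 j) + O(1/j²)`. The summable error contributes `O(n)` to
`Σ (n - j) ρ(j)²`, while the main term `(9/64) Σ_{0<j<n} (n - j)/j = (9/64)(n H_{n-1} - (n - 1))`
is `(9/64) n log n + O(n)`.
-/

open Filter Real Finset Topology Asymptotics

noncomputable def fbmRho34 (r : ℤ) : ℝ :=
  (1 / 2) * (|(r : ℝ) + 1| ^ ((3 : ℝ) / 2) + |(r : ℝ) - 1| ^ ((3 : ℝ) / 2) -
    2 * |(r : ℝ)| ^ ((3 : ℝ) / 2))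

theorem Function.Even.sum_Ioo_neg {M : Type*} [AddCommMonoid M] {f : ℤ → M} (hf : f.Even)
    {n : ℕ} (hn : 0 < n) :
    ∑ r ∈ Ioo (-(n : ℤ)) n, f r = f 0 + 2 • ∑ j ∈ Ioo 0 n, f j := by
  have hsplit : Ioo (-(n : ℤ)) n = Ioo (-(n : ℤ)) 0 ∪ insert 0 (Ioo 0 (n : ℤ)) := by
    ext r; simp only [mem_union, mem_insert, mem_Ioo]; omega
  have hdisj : Disjoint (Ioo (-(n : ℤ)) 0) (insert 0 (Ioo 0 (n : ℤ))) := by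
    simp only [disjoint_left, mem_insert, mem_Ioo]; omega
  have hneg : ∑ r ∈ Ioo (-(n : ℤ)) 0, f r = ∑ r ∈ Ioo (0 : ℤ) n, f r :=
    sum_nbij' Neg.neg Neg.neg (by simp; omega) (by simp; omega) (by simp) (by simp)
      (fun r _ => (hf r).symm)
  have hcast : ∑ r ∈ Ioo (0 : ℤ) n, f r = ∑ j ∈ Ioo 0 n, f j :=
    sum_nbij' Int.toNat (↑) (by simp; omega) (by simp) (by simp; omega) (by simp)
      (fun r hr => by rw [Int.toNat_of_nonneg (mem_Ioo.mp hr).1.le])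
  rw [hsplit, sum_union hdisj, sum_insert (by simp), hneg, hcast, two_nsmul]
  abel

theorem abs_sum_Ioo_sub_div_sub_mul_log_le (n : ℕ) :
    |∑ j ∈ Ioo 0 n, ((n : ℝ) - j) / j - n * log n| ≤ n := by
  rcases n.eq_zero_or_pos with rfl | hn
  · simp
  obtain ⟨m, rfl⟩ := Nat.exists_eq_add_of_le' hn
  have hIoo : Ioo 0 (m + 1) = Icc 1 m := by ext j; simp only [mem_Ioo, mem_Icc]; omega
  have hsum : ∑ j ∈ Ioo 0 (m + 1), ((m + 1 : ℕ) - j : ℝ) / j = (m + 1) * harmonic m - m := by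
    rw [hIoo, harmonic_eq_sum_Icc]
    calc ∑ j ∈ Icc 1 m, ((m + 1 : ℕ) - j : ℝ) / j = ∑ j ∈ Icc 1 m, ((m + 1) * (j : ℝ)⁻¹ - 1) :=
          sum_congr rfl fun j hj => by
            have hj0 : (j : ℝ) ≠ 0 :=
              Nat.cast_ne_zero.mpr (Nat.one_le_iff_ne_zero.mp (mem_Icc.mp hj).1)
            push_cast
            field_simp
      _ = _ := by rw [sum_sub_distrib, ← mul_sum]; simp
  have hlow : log (m + 1) ≤ harmonic m := by exact_mod_cast log_add_one_le_harmonic m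
  have hupp : (harmonic m : ℝ) ≤ 1 + log (m + 1) := by
    rcases m.eq_zero_or_pos with rfl | hm
    · simp
    · exact (harmonic_le_one_add_log m).trans (by gcongr; linarith)
  have hlog : 0 ≤ log ((m : ℝ) + 1) := log_nonneg (by simp)
  rw [hsum, abs_le]
  push_cast
  constructor <;> nlinarith

theorem abs_sum_Ioo_sub_mul_le_mul_tsum {b : ℕ → ℝ} (hb : Summable fun r => |b r|) (n : ℕ) :
    |∑ j ∈ Ioo 0 n, ((n : ℝ) - j) * b j| ≤ n * ∑' r, |b r| :=
  calc |∑ j ∈ Ioo 0 n, ((n : ℝ) - j) * b j| ≤ ∑ j ∈ Ioo 0 n, n * |b j| :=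
        (abs_sum_le_sum_abs _ _).trans <| sum_le_sum fun j hj => by
          have hjn : (j : ℝ) < n := by exact_mod_cast (mem_Ioo.mp hj).2
          rw [abs_mul, abs_of_pos (sub_pos.mpr hjn)]
          gcongr
          linarith
    _ ≤ n * ∑' r, |b r| := by
        rw [← mul_sum]
        gcongr
        exact hb.sum_le_tsum _ fun r _ => abs_nonneg _

theorem tendsto_sum_Ioo_sub_mul_div_mul_log {a : ℕ → ℝ} {c : ℝ}
    (ha : Summable fun r : ℕ => |a r - c / r|) :
    Tendsto (fun n : ℕ => (∑ j ∈ Ioo 0 n, ((n : ℝ) - j) * a j) / (n * log n)) atTop (𝓝 c) := by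
  have hbound (n : ℕ) : |∑ j ∈ Ioo 0 n, ((n : ℝ) - j) * a j - c * (n * log n)|
      ≤ (∑' r, |a r - c / r| + |c|) * n := by
    have hsplit : ∑ j ∈ Ioo 0 n, ((n : ℝ) - j) * a j - c * (n * log n)
        = ∑ j ∈ Ioo 0 n, ((n : ℝ) - j) * (a j - c / j)
          + c * (∑ j ∈ Ioo 0 n, ((n : ℝ) - j) / j - n * log n) := by
      simp only [mul_sub, mul_sum, sum_sub_distrib]
      ring_nf
    have herr := abs_sum_Ioo_sub_mul_le_mul_tsum ha n
    have hharm := abs_sum_Ioo_sub_div_sub_mul_log_le n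
    rw [hsplit]
    refine (abs_add_le _ _).trans ?_
    rw [abs_mul]
    calc _ ≤ n * ∑' r, |a r - c / r| + |c| * n :=
          add_le_add herr (mul_le_mul_of_nonneg_left hharm (abs_nonneg c))
      _ = _ := by ring
  have hO : (fun n : ℕ => ∑ j ∈ Ioo 0 n, ((n : ℝ) - j) * a j - c * (n * log n))
      =O[atTop] (fun n : ℕ => (n : ℝ)) :=
    IsBigO.of_bound _ (Eventually.of_forall fun n => by simpa using hbound n)
  have ho : (fun n : ℕ => (n : ℝ)) =o[atTop] (fun n : ℕ => n * log n) := by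
    simpa using (isBigO_refl (fun n : ℕ => (n : ℝ)) atTop).mul_isLittleO
      ((isLittleO_const_log_atTop (c := 1)).comp_tendsto tendsto_natCast_atTop_atTop)
  have hlim := ((hO.trans_isLittleO ho).tendsto_div_nhds_zero).add_const c
  rw [zero_add] at hlim
  refine hlim.congr' ?_
  filter_upwards [eventually_gt_atTop 1] with n hn
  have hlog : 0 < log n := log_pos (by exact_mod_cast hn)
  have hne : (n : ℝ) * log n ≠ 0 := by positivity
  rw [sub_div, mul_div_assoc, div_self hne, mul_one, sub_add_cancel]

theorem Function.Even.tendsto_sum_Ioo_neg_sub_abs_mul_div_mul_log {γ : ℤ → ℝ} {c : ℝ}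
    (hγ : γ.Even) (hsum : Summable fun r : ℕ => |γ r - c / r|) :
    Tendsto (fun n : ℕ => (∑ r ∈ Ioo (-(n : ℤ)) n, ((n : ℝ) - |(r : ℝ)|) * γ r) / (n * log n))
      atTop (𝓝 (2 * c)) := by
  have hsplit (n : ℕ) (hn : 0 < n) : ∑ r ∈ Ioo (-(n : ℤ)) n, ((n : ℝ) - |(r : ℝ)|) * γ r
      = n * γ 0 + 2 * ∑ j ∈ Ioo 0 n, ((n : ℝ) - j) * γ j := by
    rw [Function.Even.sum_Ioo_neg (fun r => by rw [hγ, Int.cast_neg, abs_neg]) hn]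
    simp
  have hlim : Tendsto (fun n : ℕ => γ 0 / log n
      + 2 * ((∑ j ∈ Ioo 0 n, ((n : ℝ) - j) * γ j) / (n * log n))) atTop (𝓝 (0 + 2 * c)) :=
    (tendsto_const_nhds.div_atTop (tendsto_log_atTop.comp tendsto_natCast_atTop_atTop)).add
      ((tendsto_sum_Ioo_sub_mul_div_mul_log hsum).const_mul 2)
  rw [zero_add] at hlim
  refine hlim.congr' ?_
  filter_upwards [eventually_gt_atTop 0] with n hn
  rw [hsplit n hn, add_div, mul_div_mul_left _ _ (by positivity), mul_div_assoc]

theorem fbmRho34_even : fbmRho34.Even := fun r => by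
  simp only [fbmRho34, Int.cast_neg]
  rw [show -(r : ℝ) + 1 = -((r : ℝ) - 1) by ring, show -(r : ℝ) - 1 = -((r : ℝ) + 1) by ring,
    abs_neg, abs_neg, abs_neg]
  ring

theorem hasDerivAt_rpow_three_halves (x : ℝ) :
    HasDerivAt (fun y : ℝ => y ^ ((3 : ℝ) / 2)) (3 / 2 * √x) x := by
  convert hasDerivAt_rpow_const (x := x) (p := 3 / 2) (Or.inr (by norm_num)) using 1
  rw [sqrt_eq_rpow]
  norm_num

theorem exists_fbmRho34_eq {r : ℕ} (hr : 1 ≤ r) :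
    ∃ c ∈ Set.Ioo ((r : ℝ) - 1) r, fbmRho34 r = 3 / (4 * (√(c + 1) + √c)) := by
  have hr' : (1 : ℝ) ≤ r := by exact_mod_cast hr
  set φ : ℝ → ℝ := fun y => (y + 1) ^ ((3 : ℝ) / 2) - y ^ ((3 : ℝ) / 2)
  have hφ (y : ℝ) : HasDerivAt φ (3 / 2 * √(y + 1) - 3 / 2 * √y) y :=
    ((hasDerivAt_rpow_three_halves (y + 1)).comp_add_const y 1).sub
      (hasDerivAt_rpow_three_halves y)
  obtain ⟨c, hc, hslope⟩ := exists_hasDerivAt_eq_slope φ _ (sub_one_lt (r : ℝ))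
    (fun y _ => (hφ y).continuousAt.continuousWithinAt) (fun y _ => hφ y)
  refine ⟨c, hc, ?_⟩
  have hc0 : 0 ≤ c := by linarith [hc.1]
  have hρ : fbmRho34 r = (φ r - φ (r - 1)) / 2 := by
    simp only [fbmRho34, φ, Int.cast_natCast, sub_add_cancel]
    rw [abs_of_nonneg (by linarith), abs_of_nonneg (by linarith), abs_of_nonneg (by linarith)]
    ring
  have hconj : (√(c + 1) - √c) * (√(c + 1) + √c) = 1 := by
    linear_combination sq_sqrt (show 0 ≤ c + 1 by linarith) - sq_sqrt hc0
  rw [sub_sub_cancel, div_one] at hslope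
  rw [hρ, ← hslope, eq_div_iff (by positivity)]
  linear_combination 3 * hconj

theorem sq_sqrt_add_one_add_sqrt_mem {c : ℝ} (hc : 0 ≤ c) :
    (√(c + 1) + √c) ^ 2 ∈ Set.Icc (4 * c + 1) (4 * c + 2) := by
  have h1 := sq_sqrt (show 0 ≤ c + 1 by linarith)
  have h2 := sq_sqrt hc
  have hmono : √c ≤ √(c + 1) := sqrt_le_sqrt (by linarith)
  constructor <;>
    nlinarith [sq_nonneg (√(c + 1) - √c), mul_le_mul_of_nonneg_left hmono (sqrt_nonneg c)]

theorem abs_fbmRho34_sq_sub_le {r : ℕ} (hr : 1 ≤ r) :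
    |fbmRho34 r ^ 2 - 9 / 64 / (r : ℝ)| ≤ 1 / (r : ℝ) ^ 2 := by
  have hr' : (1 : ℝ) ≤ r := by exact_mod_cast hr
  obtain ⟨c, ⟨hc₁, hc₂⟩, hρ⟩ := exists_fbmRho34_eq hr
  obtain ⟨hs₁, hs₂⟩ := sq_sqrt_add_one_add_sqrt_mem (show 0 ≤ c by linarith)
  rw [hρ, div_pow, mul_pow, show (3 : ℝ) ^ 2 = 9 by norm_num, show (4 : ℝ) ^ 2 = 16 by norm_num]
  set q := (√(c + 1) + √c) ^ 2
  have hq₁ : 4 * r - 3 ≤ q := by linarith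
  have hq₂ : q ≤ 4 * r + 2 := by linarith
  have hq0 : 0 < q := by linarith
  have hr0 : (0 : ℝ) < r := by linarith
  rw [abs_le, div_div, div_sub_div _ _ (by positivity) (by positivity)]
  constructor
  · rw [neg_le, ← neg_div, div_le_div_iff₀ (by positivity) (by positivity)]
    nlinarith [mul_pos hr0 hr0]
  · rw [div_le_div_iff₀ (by positivity) (by positivity)]
    nlinarith [mul_pos hr0 hr0]

theorem summable_abs_fbmRho34_sq_sub :
    Summable fun r : ℕ => |fbmRho34 r ^ 2 - 9 / 64 / (r : ℝ)| :=
  Summable.of_norm_bounded_eventually_nat (Real.summable_one_div_nat_pow.mpr one_lt_two)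
    (by filter_upwards [eventually_ge_atTop 1] with r hr
        simpa using abs_fbmRho34_sq_sub_le hr)

/-- **Asymptotic variance of the quadratic variation of fractional Brownian
motion, critical case `H = 3/4`.** With
`σ_n² = 2 Σ_{|r|<n} (n − |r|) ρ(r)²`, one has `σ_n²/(n log n) → 9/16`. -/
theorem fbm_quadratic_variation_critical_case :
    Tendsto (fun n : ℕ =>
        (2 * ∑ r ∈ Finset.Ioo (-(n : ℤ)) (n : ℤ),
          ((n : ℝ) - |(r : ℝ)|) * (fbmRho34 r) ^ 2) / ((n : ℝ) * Real.log n))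
      atTop (nhds (9 / 16)) := by
  have hγ : (fun r => fbmRho34 r ^ 2).Even := fun r => congrArg (· ^ 2) (fbmRho34_even r)
  have hlim := hγ.tendsto_sum_Ioo_neg_sub_abs_mul_div_mul_log summable_abs_fbmRho34_sq_sub
  convert hlim.const_mul 2 using 2 with n
  · rw [mul_div_assoc]
  · norm_num
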